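/- Let Rₙ^ℓ denote the set of regular d-paths [0,ℓ] → [0,1]^n from 0ₙ to 1ₙ, Nₙ the set of natural d-paths [0,n] → [0,1]^n from 0ₙ to 1ₙ, and 𝒢(ℓ,n) the set of nondecreasing homeomorphisms [0,ℓ] → [0,n]. Then the map (φ,γ) ↦ γ ∘ φ is a bijection 𝒢(ℓ,n) × Nₙ → Rₙ^ℓ, with inverse r ↦ (L(r), r ∘ L(r)^{-1}) where L(r) is the L₁-arc length function of r. -/

import Mathlib

/-! A regular d-path `r` from `0ₙ` to `1ₙ` has a continuous, strictly increasing `L₁`-arc length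
`L(r)`, because on a monotone path `d₁` is additive and a stop interval is exactly an interval of
zero `d₁`-length; so `L(r) ∈ 𝒢(ℓ,n)`. The reparametrization `r ∘ L(r)⁻¹` has arc length equal to
the identity, and such a path is `1`-Lipschitz, hence continuous, i.e. natural. Conversely the arc
length of `δ ∘ φ` is `φ` for natural `δ`, which gives uniqueness of the factorization. -/

open Set

noncomputable section

/-- Moore composition of two paths, switching at time `ℓ₁`. -/
def mooreComp {U : Type*} (ℓ₁ : ℝ) (γ₁ γ₂ : ℝ → U) : ℝ → U :=
  fun t => if t ≤ ℓ₁ then γ₁ t else γ₂ (t - ℓ₁)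

/-- A path `γ : [0,ℓ] → U` is regular if it is constant on no nondegenerate
subinterval of `[0,ℓ]` (equivalently, it has no stop interval). -/
def IsRegularOn {U : Type*} (γ : ℝ → U) (ℓ : ℝ) : Prop :=
  ∀ a b : ℝ, 0 ≤ a → a < b → b ≤ ℓ → ∃ s ∈ Icc a b, ∃ t ∈ Icc a b, γ s ≠ γ t

/-- `𝒢(a,b)`: nondecreasing homeomorphisms from `[0,a]` to `[0,b]`, encoded as
functions `ℝ → ℝ` which are strictly monotone and continuous on `[0,a]` and map
`[0,a]` onto `[0,b]`. -/
def GSet (a b : ℝ) : Set (ℝ → ℝ) :=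
  {φ | StrictMonoOn φ (Icc 0 a) ∧ ContinuousOn φ (Icc 0 a) ∧ φ '' Icc 0 a = Icc 0 b}

/-- The `L₁`-distance on `[0,1]ⁿ` (defined on all of `ℝⁿ`). -/
def d1 {n : ℕ} (x y : Fin n → ℝ) : ℝ := ∑ i, |x i - y i|

/-- A d-path of length `ℓ` of the `n`-cube: a map continuous on `[0,ℓ]`,
nondecreasing in each coordinate, with values in `[0,1]ⁿ`. -/
def IsDPath (n : ℕ) (ℓ : ℝ) (γ : ℝ → Fin n → ℝ) : Prop :=
  ContinuousOn γ (Icc 0 ℓ) ∧ (∀ i, MonotoneOn (fun t => γ t i) (Icc 0 ℓ)) ∧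
    ∀ t ∈ Icc (0:ℝ) ℓ, ∀ i, γ t i ∈ Icc (0:ℝ) 1

/-- A regular d-path of length `ℓ` from `0ₙ` to `1ₙ`. -/
def IsRegFromTo (n : ℕ) (ℓ : ℝ) (r : ℝ → Fin n → ℝ) : Prop :=
  IsDPath n ℓ r ∧ IsRegularOn r ℓ ∧ r 0 = (fun _ => 0) ∧ r ℓ = (fun _ => 1)

/-- A natural d-path of the `n`-cube from `0ₙ` to `1ₙ`: a d-path of length `n`
whose `L₁`-arc length function is the identity. -/
def IsNaturalP (n : ℕ) (δ : ℝ → Fin n → ℝ) : Prop :=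
  IsDPath n (n : ℝ) δ ∧ δ 0 = (fun _ => 0) ∧ δ (n : ℝ) = (fun _ => 1) ∧
    ∀ t ∈ Icc (0:ℝ) (n : ℝ), d1 (δ 0) (δ t) = t

open Function

section L1Distance

variable {n : ℕ}

lemma d1_self (x : Fin n → ℝ) : d1 x x = 0 := by simp [d1]

lemma d1_nonneg (x y : Fin n → ℝ) : 0 ≤ d1 x y :=
  Finset.sum_nonneg fun _ _ => abs_nonneg _

lemma abs_sub_le_d1 (x y : Fin n → ℝ) (i : Fin n) : |x i - y i| ≤ d1 x y :=
  Finset.single_le_sum (f := fun j => |x j - y j|) (fun _ _ => abs_nonneg _) (Finset.mem_univ i)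

lemma eq_of_d1_eq_zero {x y : Fin n → ℝ} (h : d1 x y = 0) : x = y :=
  funext fun i => sub_eq_zero.1 <| abs_nonpos_iff.1 <| h ▸ abs_sub_le_d1 x y i

lemma d1_of_le {x y : Fin n → ℝ} (h : x ≤ y) : d1 x y = ∑ i, (y i - x i) :=
  Finset.sum_congr rfl fun i _ => by rw [abs_sub_comm, abs_of_nonneg (sub_nonneg.2 (h i))]

lemma d1_add_of_le {x y z : Fin n → ℝ} (hxy : x ≤ y) (hyz : y ≤ z) :
    d1 x z = d1 x y + d1 y z := by
  rw [d1_of_le hxy, d1_of_le hyz, d1_of_le (hxy.trans hyz), ← Finset.sum_add_distrib]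
  exact Finset.sum_congr rfl fun i _ => by ring

lemma d1_zero_one : d1 (fun _ : Fin n => (0 : ℝ)) (fun _ => 1) = n := by simp [d1]

end L1Distance

/-- The paper's `L(r)`. -/
def arcLength {n : ℕ} (r : ℝ → Fin n → ℝ) (t : ℝ) : ℝ := d1 (r 0) (r t)

lemma monotoneOn_of_forall_monotoneOn_apply {n : ℕ} {s : Set ℝ} {γ : ℝ → Fin n → ℝ}
    (h : ∀ i, MonotoneOn (fun t => γ t i) s) : MonotoneOn γ s :=
  fun _ ha _ hb hab i => h i ha hb hab

namespace GSet

variable {a b : ℝ} {φ : ℝ → ℝ}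

lemma mapsTo (hφ : φ ∈ GSet a b) : MapsTo φ (Icc 0 a) (Icc 0 b) :=
  fun _ ht => hφ.2.2 ▸ mem_image_of_mem φ ht

lemma surjOn (hφ : φ ∈ GSet a b) : SurjOn φ (Icc 0 a) (Icc 0 b) :=
  hφ.2.2.symm.subset

lemma map_zero_and_map_right (ha : 0 ≤ a) (hφ : φ ∈ GSet a b) : φ 0 = 0 ∧ φ a = b := by
  have himage := hφ.2.1.image_Icc_of_monotoneOn ha hφ.1.monotoneOn
  rw [hφ.2.2] at himage
  exact (Icc_eq_Icc_iff (hφ.1.monotoneOn (left_mem_Icc.2 ha) (right_mem_Icc.2 ha) ha)).1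
    himage.symm

lemma map_zero (ha : 0 ≤ a) (hφ : φ ∈ GSet a b) : φ 0 = 0 :=
  (map_zero_and_map_right ha hφ).1

lemma map_right (ha : 0 ≤ a) (hφ : φ ∈ GSet a b) : φ a = b :=
  (map_zero_and_map_right ha hφ).2

lemma of_strictMonoOn (ha : 0 ≤ a) (hmono : StrictMonoOn φ (Icc 0 a))
    (hcont : ContinuousOn φ (Icc 0 a)) (h0 : φ 0 = 0) (hb : φ a = b) : φ ∈ GSet a b :=
  ⟨hmono, hcont, by rw [hcont.image_Icc_of_monotoneOn ha hmono.monotoneOn, h0, hb]⟩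

lemma leftInvOn (hφ : φ ∈ GSet a b) : LeftInvOn (invFunOn φ (Icc 0 a)) φ (Icc 0 a) :=
  hφ.1.injOn.leftInvOn_invFunOn

lemma rightInvOn (hφ : φ ∈ GSet a b) : RightInvOn (invFunOn φ (Icc 0 a)) φ (Icc 0 b) :=
  (surjOn hφ).rightInvOn_invFunOn

lemma mapsTo_invFunOn (hφ : φ ∈ GSet a b) : MapsTo (invFunOn φ (Icc 0 a)) (Icc 0 b) (Icc 0 a) :=
  (surjOn hφ).mapsTo_invFunOn

lemma monotoneOn_invFunOn (hφ : φ ∈ GSet a b) : MonotoneOn (invFunOn φ (Icc 0 a)) (Icc 0 b) :=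
  fun s hs t ht hst => (hφ.1.le_iff_le (mapsTo_invFunOn hφ hs) (mapsTo_invFunOn hφ ht)).1 <| by
    rwa [rightInvOn hφ hs, rightInvOn hφ ht]

end GSet

section ArcLengthParametrized

variable {n : ℕ} {m : ℝ} {γ : ℝ → Fin n → ℝ}

lemma d1_eq_sub_of_arcLength_eq (hm : ∀ i, MonotoneOn (fun t => γ t i) (Icc 0 m))
    (hL : ∀ t ∈ Icc 0 m, arcLength γ t = t) {s t : ℝ} (hs : s ∈ Icc 0 m) (ht : t ∈ Icc 0 m)
    (hst : s ≤ t) : d1 (γ s) (γ t) = t - s := by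
  have hmono := monotoneOn_of_forall_monotoneOn_apply hm
  have hadd := d1_add_of_le (hmono ⟨le_rfl, hs.1.trans hs.2⟩ hs hs.1) (hmono hs ht hst)
  rw [← arcLength, ← arcLength, hL s hs, hL t ht] at hadd
  linarith

lemma injOn_of_arcLength_eq (hm : ∀ i, MonotoneOn (fun t => γ t i) (Icc 0 m))
    (hL : ∀ t ∈ Icc 0 m, arcLength γ t = t) : InjOn γ (Icc 0 m) := by
  intro s hs t ht h
  rcases le_total s t with hst | hts
  · have := d1_eq_sub_of_arcLength_eq hm hL hs ht hst
    rw [h, d1_self] at this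
    linarith
  · have := d1_eq_sub_of_arcLength_eq hm hL ht hs hts
    rw [h, d1_self] at this
    linarith

lemma dist_le_of_arcLength_eq (hm : ∀ i, MonotoneOn (fun t => γ t i) (Icc 0 m))
    (hL : ∀ t ∈ Icc 0 m, arcLength γ t = t) {s t : ℝ} (hs : s ∈ Icc 0 m) (ht : t ∈ Icc 0 m) :
    dist (γ s) (γ t) ≤ dist s t := by
  wlog hst : s ≤ t generalizing s t
  · rw [dist_comm, dist_comm s]
    exact this ht hs (le_of_not_ge hst)
  refine (dist_pi_le_iff dist_nonneg).2 fun i => ?_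
  rw [Real.dist_eq, Real.dist_eq, abs_sub_comm s, abs_of_nonneg (sub_nonneg.2 hst),
    ← d1_eq_sub_of_arcLength_eq hm hL hs ht hst]
  exact abs_sub_le_d1 _ _ i

lemma continuousOn_of_arcLength_eq (hm : ∀ i, MonotoneOn (fun t => γ t i) (Icc 0 m))
    (hL : ∀ t ∈ Icc 0 m, arcLength γ t = t) : ContinuousOn γ (Icc 0 m) :=
  (LipschitzOnWith.of_dist_le_mul fun s hs t ht => by
    simpa using dist_le_of_arcLength_eq hm hL hs ht : LipschitzOnWith 1 γ (Icc 0 m)).continuousOn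

end ArcLengthParametrized

namespace IsNaturalP

variable {n : ℕ} {ℓ : ℝ} {φ : ℝ → ℝ} {δ : ℝ → Fin n → ℝ}

lemma injOn (hδ : IsNaturalP n δ) : InjOn δ (Icc 0 n) :=
  injOn_of_arcLength_eq hδ.1.2.1 hδ.2.2.2

lemma arcLength_comp (hℓ : 0 ≤ ℓ) (hφ : φ ∈ GSet ℓ n) (hδ : IsNaturalP n δ) {t : ℝ}
    (ht : t ∈ Icc 0 ℓ) : arcLength (fun t => δ (φ t)) t = φ t := by
  rw [arcLength, GSet.map_zero hℓ hφ]
  exact hδ.2.2.2 _ (GSet.mapsTo hφ ht)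

lemma isRegFromTo_comp (hℓ : 0 ≤ ℓ) (hφ : φ ∈ GSet ℓ n) (hδ : IsNaturalP n δ) :
    IsRegFromTo n ℓ (fun t => δ (φ t)) := by
  have hφmaps := GSet.mapsTo hφ
  refine ⟨⟨hδ.1.1.comp hφ.2.1 hφmaps,
    fun i => (hδ.1.2.1 i).comp hφ.1.monotoneOn hφmaps, fun t ht => hδ.1.2.2 _ (hφmaps ht)⟩,
    ?_, by simp only [GSet.map_zero hℓ hφ, hδ.2.1], by simp only [GSet.map_right hℓ hφ, hδ.2.2.1]⟩
  intro a b ha hab hb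
  have haI : a ∈ Icc 0 ℓ := ⟨ha, hab.le.trans hb⟩
  have hbI : b ∈ Icc 0 ℓ := ⟨ha.trans hab.le, hb⟩
  exact ⟨a, left_mem_Icc.2 hab.le, b, right_mem_Icc.2 hab.le,
    fun h => (hφ.1 haI hbI hab).ne (hδ.injOn (hφmaps haI) (hφmaps hbI) h)⟩

lemma eqOn_of_comp_eqOn (hℓ : 0 ≤ ℓ) {φ' : ℝ → ℝ} (hφ : φ ∈ GSet ℓ n) (hφ' : φ' ∈ GSet ℓ n)
    {δ' : ℝ → Fin n → ℝ} (hδ : IsNaturalP n δ) (hδ' : IsNaturalP n δ')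
    (h : ∀ t ∈ Icc 0 ℓ, δ (φ t) = δ' (φ' t)) :
    (∀ t ∈ Icc 0 ℓ, φ t = φ' t) ∧ ∀ s ∈ Icc (0 : ℝ) n, δ s = δ' s := by
  have hφφ' : ∀ t ∈ Icc 0 ℓ, φ t = φ' t := fun t ht => by
    rw [← hδ.arcLength_comp hℓ hφ ht, ← hδ'.arcLength_comp hℓ hφ' ht, arcLength, arcLength,
      h 0 (left_mem_Icc.2 hℓ), h t ht]
  refine ⟨hφφ', fun s hs => ?_⟩
  obtain ⟨t, ht, rfl⟩ := GSet.surjOn hφ hs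
  rw [h t ht, hφφ' t ht]

end IsNaturalP

section ArcLength

variable {n : ℕ} {ℓ : ℝ} {r : ℝ → Fin n → ℝ}

lemma continuousOn_arcLength (hr : ContinuousOn r (Icc 0 ℓ)) :
    ContinuousOn (arcLength r) (Icc 0 ℓ) := by
  unfold arcLength d1
  fun_prop

lemma strictMonoOn_arcLength (hm : ∀ i, MonotoneOn (fun t => r t i) (Icc 0 ℓ))
    (hreg : IsRegularOn r ℓ) : StrictMonoOn (arcLength r) (Icc 0 ℓ) := by
  intro s hs t ht hst
  have hmono := monotoneOn_of_forall_monotoneOn_apply hm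
  have hadd := d1_add_of_le (hmono ⟨le_rfl, hs.1.trans hs.2⟩ hs hs.1) (hmono hs ht hst.le)
  suffices 0 < d1 (r s) (r t) by unfold arcLength; linarith
  refine (d1_nonneg _ _).lt_of_ne' fun hzero => ?_
  have hconst : ∀ u ∈ Icc s t, r u = r s := fun u hu =>
    have huI : u ∈ Icc 0 ℓ := ⟨hs.1.trans hu.1, hu.2.trans ht.2⟩
    le_antisymm ((hmono huI ht hu.2).trans (eq_of_d1_eq_zero hzero).ge) (hmono hs huI hu.1)
  obtain ⟨u, hu, v, hv, huv⟩ := hreg s t hs.1 hst ht.2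
  exact huv ((hconst u hu).trans (hconst v hv).symm)

lemma arcLength_mem_gSet (hℓ : 0 ≤ ℓ) (hr : IsRegFromTo n ℓ r) : arcLength r ∈ GSet ℓ n :=
  GSet.of_strictMonoOn hℓ (strictMonoOn_arcLength hr.1.2.1 hr.2.1)
    (continuousOn_arcLength hr.1.1) (d1_self _)
    (by rw [arcLength, hr.2.2.1, hr.2.2.2, d1_zero_one])

lemma isNaturalP_comp_invFunOn (hℓ : 0 ≤ ℓ) (hr : IsRegFromTo n ℓ r) :
    IsNaturalP n (fun s => r (invFunOn (arcLength r) (Icc 0 ℓ) s)) := by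
  have hL := arcLength_mem_gSet hℓ hr
  set ψ := invFunOn (arcLength r) (Icc 0 ℓ)
  have hψmaps : MapsTo ψ (Icc 0 n) (Icc 0 ℓ) := GSet.mapsTo_invFunOn hL
  have hψ0 : ψ 0 = 0 := by
    simpa [GSet.map_zero hℓ hL] using GSet.leftInvOn hL (left_mem_Icc.2 hℓ)
  have hψn : ψ n = ℓ := by
    simpa [GSet.map_right hℓ hL] using GSet.leftInvOn hL (right_mem_Icc.2 hℓ)
  have hm : ∀ i, MonotoneOn (fun s => r (ψ s) i) (Icc 0 n) :=
    fun i => (hr.1.2.1 i).comp (GSet.monotoneOn_invFunOn hL) hψmaps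
  have harc : ∀ s ∈ Icc (0 : ℝ) n, arcLength (fun s => r (ψ s)) s = s := fun s hs => by
    rw [arcLength, hψ0]
    exact GSet.rightInvOn hL hs
  exact ⟨⟨continuousOn_of_arcLength_eq hm harc, hm, fun s hs => hr.1.2.2 _ (hψmaps hs)⟩,
    by simp only [hψ0, hr.2.2.1], by simp only [hψn, hr.2.2.2], harc⟩

end ArcLength

theorem stmt11_general (n : ℕ) (ℓ : ℝ) (hℓ : 0 < ℓ) :
    (∀ φ ∈ GSet ℓ (n : ℝ), ∀ δ : ℝ → Fin n → ℝ, IsNaturalP n δ →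
        IsRegFromTo n ℓ (fun t => δ (φ t))) ∧
    (∀ r : ℝ → Fin n → ℝ, IsRegFromTo n ℓ r →
      ∃ φ ∈ GSet ℓ (n : ℝ), ∃ δ : ℝ → Fin n → ℝ, IsNaturalP n δ ∧
        (∀ t ∈ Icc (0:ℝ) ℓ, r t = δ (φ t)) ∧
        (∀ t ∈ Icc (0:ℝ) ℓ, φ t = d1 (r 0) (r t)) ∧
        ∀ φ' ∈ GSet ℓ (n : ℝ), ∀ δ' : ℝ → Fin n → ℝ, IsNaturalP n δ' →
          (∀ t ∈ Icc (0:ℝ) ℓ, r t = δ' (φ' t)) →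
          (∀ t ∈ Icc (0:ℝ) ℓ, φ' t = φ t) ∧
            ∀ s ∈ Icc (0:ℝ) (n : ℝ), δ' s = δ s) := by
  refine ⟨fun φ hφ δ hδ => hδ.isRegFromTo_comp hℓ.le hφ, fun r hr => ?_⟩
  have hL := arcLength_mem_gSet hℓ.le hr
  have hfactor : ∀ t ∈ Icc 0 ℓ, r t = r (invFunOn (arcLength r) (Icc 0 ℓ) (arcLength r t)) :=
    fun t ht => congrArg r (GSet.leftInvOn hL ht).symm
  refine ⟨arcLength r, hL, _, isNaturalP_comp_invFunOn hℓ.le hr, hfactor, fun t _ => rfl,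
    fun φ' hφ' δ' hδ' hr' => ?_⟩
  exact hδ'.eqOn_of_comp_eqOn hℓ.le hφ' hL (isNaturalP_comp_invFunOn hℓ.le hr)
    fun t ht => (hr' t ht).symm.trans (hfactor t ht)

/-- `(φ,δ) ↦ δ ∘ φ` is a bijection from `𝒢(ℓ,n) × Nₙ` onto the regular d-paths
of length `ℓ` from `0ₙ` to `1ₙ`, with inverse `r ↦ (L(r), r ∘ L(r)⁻¹)`. -/
theorem stmt11 (n : ℕ) (hn : 1 ≤ n) (ℓ : ℝ) (hℓ : 0 < ℓ) :
    (∀ φ ∈ GSet ℓ (n : ℝ), ∀ δ : ℝ → Fin n → ℝ, IsNaturalP n δ →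
        IsRegFromTo n ℓ (fun t => δ (φ t))) ∧
    (∀ r : ℝ → Fin n → ℝ, IsRegFromTo n ℓ r →
      ∃ φ ∈ GSet ℓ (n : ℝ), ∃ δ : ℝ → Fin n → ℝ, IsNaturalP n δ ∧
        (∀ t ∈ Icc (0:ℝ) ℓ, r t = δ (φ t)) ∧
        (∀ t ∈ Icc (0:ℝ) ℓ, φ t = d1 (r 0) (r t)) ∧
        ∀ φ' ∈ GSet ℓ (n : ℝ), ∀ δ' : ℝ → Fin n → ℝ, IsNaturalP n δ' →
          (∀ t ∈ Icc (0:ℝ) ℓ, r t = δ' (φ' t)) →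
          (∀ t ∈ Icc (0:ℝ) ℓ, φ' t = φ t) ∧
            ∀ s ∈ Icc (0:ℝ) (n : ℝ), δ' s = δ s) :=
  stmt11_general n ℓ hℓ
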